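/- In the simplex category Δ, for every n ≥ 1 the object [n] is the colimit of its spine: the zigzag diagram with n copies of [1] and n−1 copies of [0], where the k-th copy of [0] maps to the k-th copy of [1] via δ₀ and to the (k+1)-st copy of [1] via δ₁, and the colimit cocone sends the k-th copy of [1] to [n] via the monotone injection with image {k−1, k} (for 1 ≤ k ≤ n). -/

import Mathlib

open CategoryTheory Limits

/-- The index for the spine (zigzag) diagram of `[n+1]`: `n+1` copies of the interval
`[1]` (indexed by `Fin (n+1)`) and `n` copies of the point `[0]` (indexed by `Fin n`),
where the `k`-th copy of `[0]` maps to the `k`-th copy of `[1]` via `δ₀` and to the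
`(k+1)`-st copy of `[1]` via `δ₁`. -/
def spineIndex (n : ℕ) :
    MultispanIndex ⟨Fin n, Fin (n + 1), fun k => k.castSucc, fun k => k.succ⟩ SimplexCategory where
  left _ := SimplexCategory.mk 0
  right _ := SimplexCategory.mk 1
  fst _ := SimplexCategory.δ 0
  snd _ := SimplexCategory.δ 1

/-- The spine cocone on `[n+1]`: the leg at the `k`-th copy of `[1]` is the monotone
injection `[1] → [n+1]` with image `{k, k+1}`. -/
def spineCocone (n : ℕ) : Multicofork (spineIndex n) :=
  Multicofork.ofπ (spineIndex n) (SimplexCategory.mk (n + 1))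
    (fun k => SimplexCategory.mkOfSucc k)
    (by
      intro k
      show SimplexCategory.δ 0 ≫ SimplexCategory.mkOfSucc k.castSucc =
        SimplexCategory.δ 1 ≫ SimplexCategory.mkOfSucc k.succ
      rw [SimplexCategory.eq_const_of_zero (SimplexCategory.δ 0 ≫ _),
        SimplexCategory.eq_const_of_zero (SimplexCategory.δ 1 ≫ _)]
      congr 1)

/-!
Every vertex of `[n+1]` is an endpoint of one of the edges `{k, k+1}`, so a map out of `[n+1]`
is determined by its restrictions to these edges. Conversely, a cocone on the spine is a chain
of edges `[1] → X` in which consecutive edges agree on their shared vertex, so reading off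
endpoints gives a well-defined map `Fin (n+2) → Fin (X.len+1)`; it is monotone because
monotonicity only has to be checked on successive elements, where it is that of a single edge.
-/

namespace Fin

variable {α : Type*} [Preorder α] {n : ℕ}

def pathOfEdges (e : Fin (n + 1) → Fin 2 →o α) : Fin (n + 2) → α :=
  Fin.cases (e 0 0) fun k => e k 1

@[simp]
lemma pathOfEdges_succ (e : Fin (n + 1) → Fin 2 →o α) (k : Fin (n + 1)) :
    pathOfEdges e k.succ = e k 1 :=
  rfl

variable {e : Fin (n + 1) → Fin 2 →o α}

lemma pathOfEdges_castSucc (he : ∀ k : Fin n, e k.castSucc 1 = e k.succ 0) (k : Fin (n + 1)) :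
    pathOfEdges e k.castSucc = e k 0 := by
  induction k using Fin.cases with
  | zero => rfl
  | succ j => rw [← Fin.succ_castSucc, pathOfEdges_succ, he]

lemma monotone_pathOfEdges (he : ∀ k : Fin n, e k.castSucc 1 = e k.succ 0) :
    Monotone (pathOfEdges e) := by
  refine Fin.monotone_iff_le_succ.2 fun k => ?_
  rw [pathOfEdges_castSucc he, pathOfEdges_succ]
  exact (e k).monotone zero_le_one

end Fin

open Simplicial

namespace SimplexCategory

lemma hom_ext_of_mkOfSucc {n : ℕ} {X : SimplexCategory} {f g : ⦋n + 1⦌ ⟶ X}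
    (h : ∀ k : Fin (n + 1), mkOfSucc k ≫ f = mkOfSucc k ≫ g) : f = g := by
  ext i : 3
  induction i using Fin.cases with
  | zero => exact congr(Hom.toOrderHom $(h 0) 0)
  | succ k => exact congr(Hom.toOrderHom $(h k) 1)

variable {n : ℕ} (E : Multicofork (spineIndex n))

lemma spine_π_one_eq_π_zero (k : Fin n) :
    (E.π k.castSucc).toOrderHom 1 = (E.π k.succ).toOrderHom 0 :=
  congr(Hom.toOrderHom $(E.condition k) 0)

def spineDesc : ⦋n + 1⦌ ⟶ E.pt :=
  Hom.mk ⟨Fin.pathOfEdges fun k => (E.π k).toOrderHom,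
    Fin.monotone_pathOfEdges (spine_π_one_eq_π_zero E)⟩

lemma mkOfSucc_comp_spineDesc (k : Fin (n + 1)) : mkOfSucc k ≫ spineDesc E = E.π k :=
  Hom.ext_one_left _ _
    (Fin.pathOfEdges_castSucc (e := fun k => (E.π k).toOrderHom) (spine_π_one_eq_π_zero E) k)

end SimplexCategory

open SimplexCategory in
/-- In the simplex category `Δ`, for every `n ≥ 1` the object `[n]` is
the colimit of its spine: the zigzag diagram with `n` copies of `[1]` and `n−1` copies
of `[0]`, where the `k`-th copy of `[0]` maps to the `k`-th copy of `[1]` via `δ₀` and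
to the `(k+1)`-st copy of `[1]` via `δ₁`, and the colimit cocone sends the `k`-th copy
of `[1]` to `[n]` via the monotone injection with image `{k−1, k}` (for `1 ≤ k ≤ n`).
(Here `[n]` is written `[m+1]` with `m ≥ 0`, and the copies are `0`-indexed.) -/
theorem spine_isColimit (n : ℕ) : Nonempty (IsColimit (spineCocone n)) :=
  ⟨Multicofork.IsColimit.mk _ spineDesc mkOfSucc_comp_spineDesc fun E _ hm =>
    hom_ext_of_mkOfSucc fun k => (hm k).trans (mkOfSucc_comp_spineDesc E k).symm⟩
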